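/- arXiv:1408.1687 — 4 statements merged into one kernel-verified Lean document; each statement's English description precedes it below -/
import Mathlib

section
/- Let R be a ring with identity in which 2 is invertible, and let a ∈ R be such that a - a³ is regular (i.e., a - a³ = (a-a³)s(a-a³) for some s ∈ R). Then a itself is regular; explicitly, a = axa where x = a + (1-a²)s(1-a²). -/
noncomputable section

namespace SepExchange

variable (R : Type) [Ring R]

/-- The right annihilator `r(a)` as a right `R`-submodule of `R`. -/
def rAnn (a : R) : Submodule Rᵐᵒᵖ R where
  carrier := {x | a * x = 0}
  add_mem' := by intro x y hx hy; simp_all [Set.mem_setOf_eq, mul_add]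
  zero_mem' := by simp
  smul_mem' := by
    intro c x hx
    simp only [Set.mem_setOf_eq, MulOpposite.smul_eq_mul_unop] at *
    rw [← mul_assoc, hx, zero_mul]

/-- The principal right ideal `aR` as a right `R`-submodule of `R`. -/
def rIdeal (a : R) : Submodule Rᵐᵒᵖ R := Submodule.span Rᵐᵒᵖ {a}

/-- The right `R`-module `a·r(a²) = {a*t : a²*t = 0}`. -/
def arAnn2 (a : R) : Submodule Rᵐᵒᵖ R where
  carrier := {x | ∃ t, x = a * t ∧ a ^ 2 * t = 0}
  add_mem' := by
    rintro x y ⟨t1, rfl, h1⟩ ⟨t2, rfl, h2⟩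
    exact ⟨t1 + t2, by rw [mul_add], by rw [mul_add, h1, h2, add_zero]⟩
  zero_mem' := ⟨0, by simp, by simp⟩
  smul_mem' := by
    rintro c x ⟨t, rfl, ht⟩
    refine ⟨t * c.unop, ?_, ?_⟩
    · simp only [MulOpposite.smul_eq_mul_unop, mul_assoc]
    · rw [← mul_assoc, ht, zero_mul]

/-- `R` is an exchange ring: for each `a` there is an idempotent `e ∈ aR`
with `1 - e ∈ (1-a)R`. -/
def ExchangeRing : Prop :=
  ∀ a : R, ∃ e : R, IsIdempotentElem e ∧ (∃ r, e = a * r) ∧ (∃ s, (1 : R) - e = (1 - a) * s)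

/-- `R` is separative: `A⊕A ≅ A⊕B ≅ B⊕B ⟹ A ≅ B` for finitely generated
projective right `R`-modules. -/
def Separative : Prop :=
  ∀ (A B : Type) [AddCommGroup A] [Module Rᵐᵒᵖ A] [AddCommGroup B] [Module Rᵐᵒᵖ B],
    Module.Finite Rᵐᵒᵖ A → Module.Projective Rᵐᵒᵖ A →
    Module.Finite Rᵐᵒᵖ B → Module.Projective Rᵐᵒᵖ B →
    Nonempty ((A × A) ≃ₗ[Rᵐᵒᵖ] (A × B)) → Nonempty ((A × B) ≃ₗ[Rᵐᵒᵖ] (B × B)) →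
    Nonempty (A ≃ₗ[Rᵐᵒᵖ] B)

/-- `a` is unit-regular. -/
def IsUnitRegular (a : R) : Prop := ∃ u : Rˣ, a = a * (u : R) * a

/-- `a` is special clean: there is an idempotent `e` with `a - e` a unit and
`aR ∩ eR = 0`. -/
def IsSpecialClean (a : R) : Prop :=
  ∃ e : R, IsIdempotentElem e ∧ IsUnit (a - e) ∧ rIdeal R a ⊓ rIdeal R e = ⊥

/-- `A ≲⊕ B`: `A` is isomorphic to a direct summand of `B` (right `R`-modules). -/
def SummandOf (A B : Type) [AddCommGroup A] [Module Rᵐᵒᵖ A]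
    [AddCommGroup B] [Module Rᵐᵒᵖ B] : Prop :=
  ∃ N N' : Submodule Rᵐᵒᵖ B, IsCompl N N' ∧ Nonempty (A ≃ₗ[Rᵐᵒᵖ] ↥N)

/-- `A ∝ B`: `A` is isomorphic to a direct summand of a finite direct sum of
copies of `B`. -/
def Propto (A B : Type) [AddCommGroup A] [Module Rᵐᵒᵖ A]
    [AddCommGroup B] [Module Rᵐᵒᵖ B] : Prop :=
  ∃ m : ℕ, 0 < m ∧ SummandOf R A (Fin m → B)

end SepExchange

theorem sub_pow_three_eq_mul_one_sub_sq {R : Type*} [Ring R] (a : R) :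
    a - a ^ 3 = a * (1 - a ^ 2) := by
  noncomm_ring

theorem sub_pow_three_eq_one_sub_sq_mul {R : Type*} [Ring R] (a : R) :
    a - a ^ 3 = (1 - a ^ 2) * a := by
  noncomm_ring

open SepExchange in
theorem stmt0_general (R : Type) [Ring R] (a s : R)
    (h : a - a ^ 3 = (a - a ^ 3) * s * (a - a ^ 3)) :
    a = a * (a + (1 - a ^ 2) * s * (1 - a ^ 2)) * a :=
  calc a = a ^ 3 + (a - a ^ 3) := by abel
    _ = a ^ 3 + (a - a ^ 3) * s * (a - a ^ 3) := by rw [← h]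
    _ = a ^ 3 + a * (1 - a ^ 2) * s * ((1 - a ^ 2) * a) := by
      rw [← sub_pow_three_eq_mul_one_sub_sq, ← sub_pow_three_eq_one_sub_sq_mul]
    _ = a * (a + (1 - a ^ 2) * s * (1 - a ^ 2)) * a := by noncomm_ring

open SepExchange in
/-- If `2` is invertible and `a - a³` is regular with inner inverse `s`, then
`a` is regular with inner inverse `a + (1-a²)s(1-a²)`. -/
theorem stmt0 (R : Type) [Ring R] [Invertible (2 : R)] (a s : R)
    (h : a - a ^ 3 = (a - a ^ 3) * s * (a - a ^ 3)) :
    a = a * (a + (1 - a ^ 2) * s * (1 - a ^ 2)) * a :=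
  stmt0_general R a s h
end
end

section
/- Let R be a ring and a ∈ R with a - a³ = (a-a³)s(a-a³) for some s ∈ R. Then 1 - a² is regular; explicitly, 1 - a² = (1-a²)(1 + a²sa)(1-a²). -/
noncomputable section

open SepExchange in
/-- If `a - a³` is regular with inner inverse `s`, then `1 - a²` is regular;
explicitly `1 - a² = (1-a²)(1 + a²sa)(1-a²)`. -/
theorem stmt7 (R : Type) [Ring R] (a s : R)
    (h : a - a ^ 3 = (a - a ^ 3) * s * (a - a ^ 3)) :
    1 - a ^ 2 = (1 - a ^ 2) * (1 + a ^ 2 * s * a) * (1 - a ^ 2) := by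
  calc 1 - a ^ 2 = (1 - a ^ 2) * (1 - a ^ 2) + a * (a - a ^ 3) := by noncomm_ring
    _ = (1 - a ^ 2) * (1 - a ^ 2) + a * ((a - a ^ 3) * s * (a - a ^ 3)) := by rw [← h]
    -- `a` commutes with `1 - a²`, so `(1 - a²) a² s a (1 - a²) = a (a - a³) s (a - a³)`.
    _ = (1 - a ^ 2) * (1 + a ^ 2 * s * a) * (1 - a ^ 2) := by noncomm_ring
end
end

section
/- Let R be a separative exchange ring in which 2 is invertible, and let a ∈ R with a - a³ regular. If (a-a³)R ∝ r(a) and (a-a³)R ∝ R/aR, then a is unit-regular. -/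
noncomputable section

/-!
Write `b = a - a³` and let `t` be an inner inverse of `b`. Then `x = (1 - a²) t (1 - a²) + a` is
an inner inverse of `a`, so `r(a) = (1 - xa)R` and `R/aR ≅ (1 - ax)R` are finitely generated
projective. Left multiplications by explicit elements give `r(a) ⊕ tbR ≅ (1 - a²)R ≅ R/aR ⊕ bR`
and `tbR ≅ bR`, hence `r(a) ⊕ bR ≅ R/aR ⊕ bR`. Since `bR ∝ r(a)` and `bR ∝ R/aR`, separativity
cancels `bR`. In the monoid of isomorphism classes this reads: `u + c = v + c` with `c ≤ m u` and
`c ≤ n v` gives `(N+1)u = Nu + v` and `(N+1)v = Nv + u`, and separativity then descends through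
`Nu = Nv`, `(N+1)u = (N+1)v` down to `u = v`. Finally an isomorphism `(1 - xa)R ≅ (1 - ax)R`
yields `p, q` with `qp = 1 - xa` and `pq = 1 - ax`, and `x + q` is a unit inverse of `a`.
-/

namespace SepExchange

section Monoid

variable {S : Type*} [AddCommMonoid S]

def IsSeparativeOn (P : AddSubmonoid S) : Prop :=
  ∀ x ∈ P, ∀ y ∈ P, x + x = x + y → x + y = y + y → x = y

variable {P : AddSubmonoid S} {a b : S}

theorem add_nsmul_eq_of_succ_nsmul_eq {m : ℕ} (h : (m + 1) • a = m • a + b) (k : ℕ) :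
    (m + k) • a = m • a + k • b := by
  induction k with
  | zero => simp
  | succ k ih =>
    calc (m + (k + 1)) • a = (m + 1) • a + k • a := by module
      _ = (m + k) • a + b := by rw [h]; module
      _ = m • a + (k + 1) • b := by rw [ih]; module

theorem IsSeparativeOn.nsmul_eq_nsmul (hP : IsSeparativeOn P) (ha : a ∈ P) (hb : b ∈ P) {m : ℕ}
    (hab : (m + 1) • a = m • a + b) (hba : (m + 1) • b = m • b + a) : m • a = m • b := by
  refine hP _ (P.nsmul_mem ha m) _ (P.nsmul_mem hb m) ?_ ?_
  · rw [← add_nsmul, add_nsmul_eq_of_succ_nsmul_eq hab]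
  · rw [← add_nsmul, add_nsmul_eq_of_succ_nsmul_eq hba, add_comm]

theorem IsSeparativeOn.succ_nsmul_eq_nsmul_add (hP : IsSeparativeOn P) (ha : a ∈ P) (hb : b ∈ P)
    {n : ℕ} (h2 : (n + 2) • a = (n + 2) • b) (h3 : (n + 3) • a = (n + 3) • b) :
    (n + 2) • a = (n + 1) • a + b := by
  refine hP _ (P.nsmul_mem ha _) _ (P.add_mem (P.nsmul_mem ha _) hb) ?_ ?_
  · calc (n + 2) • a + (n + 2) • a = (n + 1) • a + (n + 3) • a := by module
      _ = (n + 1) • a + ((n + 2) • a + b) := by rw [h3, h2]; module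
      _ = (n + 2) • a + ((n + 1) • a + b) := by module
  · calc (n + 2) • a + ((n + 1) • a + b) = n • a + (n + 3) • a + b := by module
      _ = n • a + ((n + 2) • a + b) + b := by rw [h3, h2]; module
      _ = ((n + 1) • a + b) + ((n + 1) • a + b) := by module

theorem IsSeparativeOn.eq_of_nsmul_eq (hP : IsSeparativeOn P) (ha : a ∈ P) (hb : b ∈ P) :
    ∀ n : ℕ, n • a = n • b → (n + 1) • a = (n + 1) • b → a = b
  | 0, _, h | 1, h, _ => by simpa using h
  | n + 2, h2, h3 =>
    hP.eq_of_nsmul_eq ha hb (n + 1)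
      (hP.nsmul_eq_nsmul ha hb (hP.succ_nsmul_eq_nsmul_add ha hb h2 h3)
        (hP.succ_nsmul_eq_nsmul_add hb ha h2.symm h3.symm)) h2

theorem IsSeparativeOn.eq_of_add_eq_add (hP : IsSeparativeOn P) (ha : a ∈ P) (hb : b ∈ P)
    {c : S} (h : a + c = b + c) (hca : ∃ (m : ℕ) (d : S), c + d = m • a)
    (hcb : ∃ (n : ℕ) (d : S), c + d = n • b) : a = b := by
  obtain ⟨m, d, hd⟩ := hca
  obtain ⟨n, e, he⟩ := hcb
  have hab : (m + n + 1) • a = (m + n) • a + b :=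
    calc (m + n + 1) • a = a + c + (d + n • a) := by rw [add_assoc a, ← add_assoc c, hd]; module
      _ = (m + n) • a + b := by rw [h, add_assoc b, ← add_assoc c, hd]; module
  have hba : (m + n + 1) • b = (m + n) • b + a :=
    calc (m + n + 1) • b = b + c + (e + m • b) := by rw [add_assoc b, ← add_assoc c, he]; module
      _ = (m + n) • b + a := by rw [← h, add_assoc a, ← add_assoc c, he]; module
  have hN := hP.nsmul_eq_nsmul ha hb hab hba
  exact hP.eq_of_nsmul_eq ha hb (m + n) hN (by rw [hab, hN, succ_nsmul])

end Monoid

section IsoClass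

variable (T : Type) [Ring T]

def isoSetoid : Setoid (ModuleCat.{0} T) where
  r M N := Nonempty (M ≃ₗ[T] N)
  iseqv := ⟨fun M => ⟨LinearEquiv.refl T M⟩, fun ⟨e⟩ => ⟨e.symm⟩, fun ⟨e⟩ ⟨f⟩ => ⟨e.trans f⟩⟩

def IsoClass : Type 1 := Quotient (isoSetoid T)

def IsoClass.mk (M : Type) [AddCommGroup M] [Module T M] : IsoClass T :=
  Quotient.mk (isoSetoid T) (ModuleCat.of T M)

namespace IsoClass

variable {T} {M N : Type} [AddCommGroup M] [Module T M] [AddCommGroup N] [Module T N]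

theorem mk_eq_mk_iff : mk T M = mk T N ↔ Nonempty (M ≃ₗ[T] N) := Quotient.eq (r := isoSetoid T)

@[elab_as_elim]
theorem ind {p : IsoClass T → Prop} (h : ∀ (M : Type) [AddCommGroup M] [Module T M], p (mk T M))
    (x : IsoClass T) : p x :=
  Quotient.ind (fun M : ModuleCat T => h M.carrier) x

instance : Zero (IsoClass T) := ⟨mk T PUnit⟩

instance : Add (IsoClass T) :=
  ⟨Quotient.map₂ (fun M N => ModuleCat.of T (M × N)) fun _ _ ⟨e⟩ _ _ ⟨f⟩ => ⟨e.prodCongr f⟩⟩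

theorem mk_add_mk : mk T M + mk T N = mk T (M × N) := rfl

instance : AddCommMonoid (IsoClass T) where
  add_assoc x y z := by
    induction x using ind; induction y using ind; induction z using ind
    exact mk_eq_mk_iff.2 ⟨LinearEquiv.prodAssoc T _ _ _⟩
  zero_add x := by
    induction x using ind
    exact mk_eq_mk_iff.2 ⟨LinearEquiv.uniqueProd⟩
  add_zero x := by
    induction x using ind
    exact mk_eq_mk_iff.2 ⟨LinearEquiv.prodUnique⟩
  add_comm x y := by
    induction x using ind; induction y using ind
    exact mk_eq_mk_iff.2 ⟨LinearEquiv.prodComm T _ _⟩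
  nsmul := nsmulRec

theorem mk_fin_pi (n : ℕ) : mk T (Fin n → M) = n • mk T M := by
  induction n with
  | zero => exact mk_eq_mk_iff.2 ⟨LinearEquiv.ofSubsingleton _ _⟩
  | succ n ih =>
    rw [succ_nsmul', ← ih, mk_add_mk]
    exact mk_eq_mk_iff.2 ⟨(Fin.consLinearEquiv T fun _ => M).symm⟩

theorem mk_add_mk_of_isCompl {p q : Submodule T M} (h : IsCompl p q) : mk T p + mk T q = mk T M :=
  mk_eq_mk_iff.2 ⟨Submodule.prodEquivOfIsCompl p q h⟩

variable (T) in
def finiteProjective : AddSubmonoid (IsoClass T) where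
  carrier := {x | ∃ (M : ModuleCat.{0} T), Module.Finite T M ∧ Module.Projective T M ∧ mk T M = x}
  zero_mem' := ⟨ModuleCat.of T PUnit, inferInstanceAs (Module.Finite T PUnit),
    inferInstanceAs (Module.Projective T PUnit), rfl⟩
  add_mem' := by
    rintro _ _ ⟨M, hM, hM', rfl⟩ ⟨N, hN, hN', rfl⟩
    exact ⟨ModuleCat.of T (M × N), inferInstanceAs (Module.Finite T (M × N)),
      inferInstanceAs (Module.Projective T (M × N)), rfl⟩

theorem mk_mem_finiteProjective [Module.Finite T M] [Module.Projective T M] :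
    mk T M ∈ finiteProjective T :=
  ⟨ModuleCat.of T M, ‹_›, ‹_›, rfl⟩

end IsoClass

end IsoClass

theorem Separative.isSeparativeOn {R : Type} [Ring R] (hsep : Separative R) :
    IsSeparativeOn (IsoClass.finiteProjective Rᵐᵒᵖ) := by
  rintro _ ⟨M, hM, hM', rfl⟩ _ ⟨N, hN, hN', rfl⟩ h₁ h₂
  exact IsoClass.mk_eq_mk_iff.2
    (hsep M N hM hM' hN hN' (IsoClass.mk_eq_mk_iff.1 h₁) (IsoClass.mk_eq_mk_iff.1 h₂))

section Cancellation

variable {R : Type} [Ring R] {X Y C : Type} [AddCommGroup X] [Module Rᵐᵒᵖ X]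
  [AddCommGroup Y] [Module Rᵐᵒᵖ Y] [AddCommGroup C] [Module Rᵐᵒᵖ C]

theorem Propto.exists_add_eq_nsmul (h : Propto R C X) :
    ∃ (m : ℕ) (d : IsoClass Rᵐᵒᵖ), IsoClass.mk Rᵐᵒᵖ C + d = m • IsoClass.mk Rᵐᵒᵖ X := by
  obtain ⟨m, -, N, N', hN, ⟨e⟩⟩ := h
  refine ⟨m, IsoClass.mk _ N', ?_⟩
  rw [← IsoClass.mk_fin_pi, ← IsoClass.mk_add_mk_of_isCompl hN, IsoClass.mk_eq_mk_iff.2 ⟨e⟩]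

theorem Separative.nonempty_linearEquiv_of_prod_equiv_prod (hsep : Separative R)
    [Module.Finite Rᵐᵒᵖ X] [Module.Projective Rᵐᵒᵖ X] [Module.Finite Rᵐᵒᵖ Y]
    [Module.Projective Rᵐᵒᵖ Y] (e : (X × C) ≃ₗ[Rᵐᵒᵖ] (Y × C)) (hX : Propto R C X)
    (hY : Propto R C Y) : Nonempty (X ≃ₗ[Rᵐᵒᵖ] Y) :=
  IsoClass.mk_eq_mk_iff.1 <| hsep.isSeparativeOn.eq_of_add_eq_add
    IsoClass.mk_mem_finiteProjective IsoClass.mk_mem_finiteProjective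
    (by rw [IsoClass.mk_add_mk, IsoClass.mk_add_mk, IsoClass.mk_eq_mk_iff]; exact ⟨e⟩)
    hX.exists_add_eq_nsmul hY.exists_add_eq_nsmul

end Cancellation

section RightIdeals

open MulOpposite

variable {R : Type} [Ring R]

def mulLeft (r : R) : R →ₗ[Rᵐᵒᵖ] R where
  toFun := (r * ·)
  map_add' := mul_add r
  map_smul' c v := (mul_assoc r v c.unop).symm

def mulLeftRestrict (r : R) {P Q : Submodule Rᵐᵒᵖ R} (h : ∀ v ∈ P, r * v ∈ Q) : P →ₗ[Rᵐᵒᵖ] Q :=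
  (mulLeft r).restrict h

@[simp] theorem coe_mulLeftRestrict (r : R) {P Q : Submodule Rᵐᵒᵖ R} (h : ∀ v ∈ P, r * v ∈ Q)
    (v : P) : (mulLeftRestrict r h v : R) = r * v := rfl

def mulLeftCodRestrict (r : R) {Q : Submodule Rᵐᵒᵖ R} (h : ∀ v, r * v ∈ Q) : R →ₗ[Rᵐᵒᵖ] Q :=
  (mulLeft r).codRestrict Q h

@[simp] theorem coe_mulLeftCodRestrict (r : R) {Q : Submodule Rᵐᵒᵖ R} (h : ∀ v, r * v ∈ Q)
    (v : R) : (mulLeftCodRestrict r h v : R) = r * v := rfl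

noncomputable def opLinearEquivSelf : Rᵐᵒᵖ ≃ₗ[Rᵐᵒᵖ] R :=
  LinearEquiv.ofBijective (LinearMap.toSpanSingleton Rᵐᵒᵖ R 1) <| by
    convert unop_bijective (α := R) using 1
    ext r
    simp [smul_eq_mul_unop]

instance : Module.Projective Rᵐᵒᵖ R := .of_equiv opLinearEquivSelf

theorem mem_rIdeal {g v : R} : v ∈ rIdeal R g ↔ ∃ u, g * u = v := by
  simp only [rIdeal, Submodule.mem_span_singleton, op_surjective.exists, op_smul_eq_mul]

theorem mem_rAnn {a v : R} : v ∈ rAnn R a ↔ a * v = 0 := Iff.rfl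

theorem mul_mem_rIdeal (g u : R) : g * u ∈ rIdeal R g := mem_rIdeal.2 ⟨u, rfl⟩

theorem mem_rIdeal_self (g : R) : g ∈ rIdeal R g := Submodule.mem_span_singleton_self g

theorem rIdeal_le {g : R} {P : Submodule Rᵐᵒᵖ R} (h : g ∈ P) : rIdeal R g ≤ P :=
  (Submodule.span_singleton_le_iff_mem g P).2 h

theorem mul_eq_of_mem_rIdeal {e v : R} (he : IsIdempotentElem e)
    (hv : v ∈ rIdeal R e) : e * v = v := by
  obtain ⟨u, rfl⟩ := mem_rIdeal.1 hv
  rw [← mul_assoc, he.eq]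

instance (g : R) : Module.Finite Rᵐᵒᵖ (rIdeal R g) :=
  inferInstanceAs (Module.Finite Rᵐᵒᵖ (Submodule.span Rᵐᵒᵖ {g}))

theorem projective_rIdeal {e : R} (he : IsIdempotentElem e) :
    Module.Projective Rᵐᵒᵖ (rIdeal R e) :=
  .of_split (rIdeal R e).subtype (mulLeftCodRestrict e (mul_mem_rIdeal e)) <| by
    ext v
    exact mul_eq_of_mem_rIdeal he v.2

noncomputable def rIdealMulEquiv {b t : R} (h : b * t * b = b) :
    rIdeal R (t * b) ≃ₗ[Rᵐᵒᵖ] rIdeal R b :=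
  have ht : ∀ v ∈ rIdeal R b, t * v ∈ rIdeal R (t * b) := by
    intro v hv
    obtain ⟨u, rfl⟩ := mem_rIdeal.1 hv
    exact mem_rIdeal.2 ⟨u, mul_assoc t b u⟩
  have hbtb : ∀ u, b * (t * (b * u)) = b * u := fun u => by rw [← mul_assoc, ← mul_assoc, h]
  LinearEquiv.ofLinearMap (mulLeftRestrict b fun v _ => mul_mem_rIdeal b v) (mulLeftRestrict t ht)
    (by
      ext ⟨v, hv⟩
      obtain ⟨u, rfl⟩ := mem_rIdeal.1 hv
      simp [hbtb])
    (by
      ext ⟨v, hv⟩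
      obtain ⟨u, rfl⟩ := mem_rIdeal.1 hv
      simp [mul_assoc, hbtb])

noncomputable def rAnnProdEquiv {a t : R} (ht : (a - a ^ 3) * t * (a - a ^ 3) = a - a ^ 3) :
    (rAnn R a × rIdeal R (t * (a - a ^ 3))) ≃ₗ[Rᵐᵒᵖ] rIdeal R (1 - a ^ 2) :=
  have hle : rAnn R a ≤ rIdeal R (1 - a ^ 2) := fun w hw =>
    mem_rIdeal.2 ⟨w, by rw [sub_mul, one_mul, sq, mul_assoc, mem_rAnn.1 hw, mul_zero, sub_zero]⟩
  have hker : ∀ u, (1 - (1 - a ^ 2) * t * a) * ((1 - a ^ 2) * (t * (a - a ^ 3) * u)) = 0 :=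
    fun u => calc
      _ = (1 - a ^ 2) * t * ((a - a ^ 3) - (a - a ^ 3) * t * (a - a ^ 3)) * u := by noncomm_ring
      _ = 0 := by rw [ht, sub_self, mul_zero, zero_mul]
  have hinv : ∀ u, t * a * ((1 - a ^ 2) * (t * (a - a ^ 3) * u)) = t * (a - a ^ 3) * u :=
    fun u => calc
      _ = t * ((a - a ^ 3) * t * (a - a ^ 3)) * u := by noncomm_ring
      _ = _ := by rw [ht, mul_assoc]
  have h₁ : ∀ v ∈ rIdeal R (1 - a ^ 2), (1 - (1 - a ^ 2) * t * a) * v ∈ rAnn R a := by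
    intro v hv
    obtain ⟨u, rfl⟩ := mem_rIdeal.1 hv
    rw [mem_rAnn]
    calc _ = ((a - a ^ 3) - (a - a ^ 3) * t * (a - a ^ 3)) * u := by noncomm_ring
      _ = 0 := by rw [ht, sub_self, zero_mul]
  have h₂ : ∀ v ∈ rIdeal R (1 - a ^ 2), t * a * v ∈ rIdeal R (t * (a - a ^ 3)) := by
    intro v hv
    obtain ⟨u, rfl⟩ := mem_rIdeal.1 hv
    exact mem_rIdeal.2 ⟨u, by noncomm_ring⟩
  LinearEquiv.ofLinearMap
    ((Submodule.inclusion hle).coprod (mulLeftRestrict _ fun v _ => mul_mem_rIdeal _ v))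
    ((mulLeftRestrict _ h₁).prod (mulLeftRestrict _ h₂))
    (by ext; simp [sub_mul, mul_assoc])
    (by
      ext w
      · simp [sub_mul, mul_assoc, mem_rAnn.1 w.2]
      · simp [mul_assoc, mem_rAnn.1 w.2]
      · obtain ⟨u, hu⟩ := mem_rIdeal.1 w.2
        simp [← hu, hker]
      · obtain ⟨u, hu⟩ := mem_rIdeal.1 w.2
        simp [← hu, hinv])

/-- With `e = (1 - bt)(1 - a²)`, this is the splitting `(1 - a²)R = bR ⊕ eR` together with the
isomorphism `R/aR ≅ eR` induced by `r ↦ e r`. -/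
noncomputable def rIdealEquivQuotientProd {a t : R}
    (ht : (a - a ^ 3) * t * (a - a ^ 3) = a - a ^ 3) :
    rIdeal R (1 - a ^ 2) ≃ₗ[Rᵐᵒᵖ] ((R ⧸ rIdeal R a) × rIdeal R (a - a ^ 3)) :=
  have hb : ∀ u, (1 - (a - a ^ 3) * t) * ((a - a ^ 3) * u) = 0 := fun u => calc
    _ = ((a - a ^ 3) - (a - a ^ 3) * t * (a - a ^ 3)) * u := by noncomm_ring
    _ = 0 := by rw [ht, sub_self, zero_mul]
  have hle : rIdeal R (a - a ^ 3) ≤ rIdeal R (1 - a ^ 2) :=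
    rIdeal_le (mem_rIdeal.2 ⟨a, by noncomm_ring⟩)
  have hle' : rIdeal R (a - a ^ 3) ≤ rIdeal R a :=
    rIdeal_le (mem_rIdeal.2 ⟨1 - a ^ 2, by noncomm_ring⟩)
  have hfix : ∀ w ∈ rIdeal R (a - a ^ 3), (1 - (1 - (a - a ^ 3) * t) * (1 - a ^ 2)) * w = w := by
    intro w hw
    obtain ⟨u, rfl⟩ := mem_rIdeal.1 hw
    calc _ = (a - a ^ 3) * u - (1 - (a - a ^ 3) * t) * ((a - a ^ 3) * ((1 - a ^ 2) * u)) := by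
          noncomm_ring
      _ = _ := by rw [hb, sub_zero]
  have hproj :
      (1 - (1 - (a - a ^ 3) * t) * (1 - a ^ 2)) * ((1 - (a - a ^ 3) * t) * (1 - a ^ 2)) = 0 :=
    calc _ = (1 - (a - a ^ 3) * t) * ((a - a ^ 3) * (a + (1 - a ^ 2) * t * (1 - a ^ 2))) := by
          noncomm_ring
      _ = 0 := hb _
  have hmod : (1 - (a - a ^ 3) * t) * (1 - a ^ 2) - 1 ∈ rIdeal R a :=
    mem_rIdeal.2 ⟨-a - (1 - a ^ 2) * t * (1 - a ^ 2), by noncomm_ring⟩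
  have h₁ : ∀ v ∈ rIdeal R (1 - a ^ 2),
      (1 - (1 - (a - a ^ 3) * t) * (1 - a ^ 2)) * v ∈ rIdeal R (a - a ^ 3) := by
    intro v hv
    obtain ⟨u, rfl⟩ := mem_rIdeal.1 hv
    exact mem_rIdeal.2 ⟨a * u + t * ((1 - a ^ 2) * ((1 - a ^ 2) * u)), by noncomm_ring⟩
  have h₂ : ∀ v, (1 - (a - a ^ 3) * t) * (1 - a ^ 2) * v ∈ rIdeal R (1 - a ^ 2) := fun v =>
    mem_rIdeal.2 ⟨v - a * (t * ((1 - a ^ 2) * v)), by noncomm_ring⟩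
  have hker : rIdeal R a ≤ LinearMap.ker (mulLeftCodRestrict _ h₂) := by
    refine rIdeal_le (Subtype.ext ?_)
    calc (1 - (a - a ^ 3) * t) * (1 - a ^ 2) * a = (1 - (a - a ^ 3) * t) * ((a - a ^ 3) * 1) := by
          noncomm_ring
      _ = 0 := hb 1
  LinearEquiv.ofLinearMap
    (((rIdeal R a).mkQ ∘ₗ (rIdeal R (1 - a ^ 2)).subtype).prod (mulLeftRestrict _ h₁))
    (((rIdeal R a).liftQ _ hker).coprod (Submodule.inclusion hle))
    (by
      ext w
      · simpa using (Submodule.Quotient.eq _).2 hmod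
      · simp [hproj]
      · simpa using hle' w.2
      · simp [hfix w w.2])
    (by ext; simp [sub_mul])

noncomputable def rAnnProdEquivQuotientProd {a t : R}
    (ht : (a - a ^ 3) * t * (a - a ^ 3) = a - a ^ 3) :
    (rAnn R a × rIdeal R (a - a ^ 3)) ≃ₗ[Rᵐᵒᵖ] ((R ⧸ rIdeal R a) × rIdeal R (a - a ^ 3)) :=
  ((LinearEquiv.refl _ _).prodCongr (rIdealMulEquiv ht).symm).trans
    ((rAnnProdEquiv ht).trans (rIdealEquivQuotientProd ht))

theorem rAnn_eq_rIdeal {a x : R} (hx : a * x * a = a) : rAnn R a = rIdeal R (1 - x * a) := by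
  ext w
  rw [mem_rAnn, mem_rIdeal]
  constructor
  · intro hw
    exact ⟨w, by rw [sub_mul, one_mul, mul_assoc, hw, mul_zero, sub_zero]⟩
  · rintro ⟨u, rfl⟩
    rw [← mul_assoc, mul_sub, mul_one, ← mul_assoc, hx, sub_self, zero_mul]

theorem isIdempotentElem_mul_left {a x : R} (hx : a * x * a = a) : IsIdempotentElem (a * x) := by
  rw [IsIdempotentElem, ← mul_assoc, hx]

theorem isIdempotentElem_mul_right {a x : R} (hx : a * x * a = a) : IsIdempotentElem (x * a) := by
  rw [IsIdempotentElem, mul_assoc, ← mul_assoc a, hx]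

noncomputable def quotientEquivRIdeal {a x : R} (hx : a * x * a = a) :
    (R ⧸ rIdeal R a) ≃ₗ[Rᵐᵒᵖ] rIdeal R (1 - a * x) :=
  have hker : rIdeal R a ≤ LinearMap.ker (mulLeftCodRestrict (1 - a * x) (mul_mem_rIdeal _)) :=
    rIdeal_le (Subtype.ext (by simp [sub_mul, hx]))
  LinearEquiv.ofLinearMap ((rIdeal R a).liftQ _ hker) ((rIdeal R a).mkQ ∘ₗ (rIdeal R _).subtype)
    (by
      ext ⟨v, hv⟩
      obtain ⟨u, rfl⟩ := mem_rIdeal.1 hv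
      simp [← mul_assoc, (isIdempotentElem_mul_left hx).one_sub.eq])
    (by
      ext
      have hmod : 1 - a * x - 1 ∈ rIdeal R a := mem_rIdeal.2 ⟨-x, by noncomm_ring⟩
      simpa using (Submodule.Quotient.eq _).2 hmod)

theorem coe_apply_eq_mul {e : R} (he : IsIdempotentElem e) {Q : Submodule Rᵐᵒᵖ R}
    (φ : rIdeal R e →ₗ[Rᵐᵒᵖ] Q) (v : rIdeal R e) :
    (φ v : R) = φ ⟨e, mem_rIdeal_self e⟩ * v := by
  have hv : v = op (v : R) • ⟨e, mem_rIdeal_self e⟩ :=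
    Subtype.ext (mul_eq_of_mem_rIdeal he v.2).symm
  conv_lhs => rw [hv, map_smul]
  rfl

theorem exists_mul_eq_of_rIdeal_equiv {e f : R} (he : IsIdempotentElem e)
    (hf : IsIdempotentElem f) (φ : rIdeal R e ≃ₗ[Rᵐᵒᵖ] rIdeal R f) :
    ∃ p q : R, f * p = p ∧ p * e = p ∧ e * q = q ∧ q * f = q ∧ q * p = e ∧ p * q = f := by
  refine ⟨φ ⟨e, mem_rIdeal_self e⟩, φ.symm ⟨f, mem_rIdeal_self f⟩,
    mul_eq_of_mem_rIdeal hf (φ _).2, (coe_apply_eq_mul he φ.toLinearMap ⟨e, _⟩).symm,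
    mul_eq_of_mem_rIdeal he (φ.symm _).2, (coe_apply_eq_mul hf φ.symm.toLinearMap ⟨f, _⟩).symm,
    ?_, ?_⟩
  · simpa using (coe_apply_eq_mul hf φ.symm.toLinearMap (φ ⟨e, mem_rIdeal_self e⟩)).symm
  · simpa using (coe_apply_eq_mul he φ.toLinearMap (φ.symm ⟨f, mem_rIdeal_self f⟩)).symm

theorem isUnitRegular_of_mul_eq {a x p q : R} (hx : a * x * a = a) (hx' : x * a * x = x)
    (hp : (1 - a * x) * p = p) (hp' : p * (1 - x * a) = p) (hq : (1 - x * a) * q = q)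
    (hq' : q * (1 - a * x) = q) (hqp : q * p = 1 - x * a) (hpq : p * q = 1 - a * x) :
    IsUnitRegular R a := by
  have haq : a * q = 0 := by
    rw [← hq, ← mul_assoc, mul_sub, mul_one, ← mul_assoc, hx, sub_self, zero_mul]
  have hqa : q * a = 0 := by
    rw [← hq', mul_assoc, sub_mul, one_mul, hx, sub_self, mul_zero]
  have hpx : p * x = 0 := by
    rw [← hp', mul_assoc, sub_mul, one_mul, hx', sub_self, mul_zero]
  have hxp : x * p = 0 := by
    rw [← hp, ← mul_assoc, mul_sub, mul_one, ← mul_assoc, hx', sub_self, zero_mul]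
  refine ⟨⟨x + q, a + p, ?_, ?_⟩, ?_⟩
  · rw [add_mul, mul_add, mul_add, hxp, hqa, hqp, add_zero, zero_add, add_sub_cancel]
  · rw [add_mul, mul_add, mul_add, haq, hpx, hpq, add_zero, zero_add, add_sub_cancel]
  · rw [mul_add, add_mul, haq, zero_mul, add_zero, hx]

theorem isUnitRegular_of_rAnn_equiv {a x : R} (hx : a * x * a = a)
    (φ : rAnn R a ≃ₗ[Rᵐᵒᵖ] (R ⧸ rIdeal R a)) : IsUnitRegular R a := by
  have hy : a * (x * a * x) * a = a := by rw [← mul_assoc, ← mul_assoc, hx, hx]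
  have hy' : x * a * x * a * (x * a * x) = x * a * x :=
    calc _ = x * (a * x * a) * x * a * x := by simp only [mul_assoc]
      _ = x * a * x * a * x := by rw [hx]
      _ = x * (a * x * a) * x := by simp only [mul_assoc]
      _ = x * a * x := by rw [hx]
  obtain ⟨p, q, hp, hp', hq, hq', hqp, hpq⟩ := exists_mul_eq_of_rIdeal_equiv
    (isIdempotentElem_mul_right hy).one_sub (isIdempotentElem_mul_left hy).one_sub
    ((LinearEquiv.ofEq _ _ (rAnn_eq_rIdeal hy)).symm.trans (φ.trans (quotientEquivRIdeal hy)))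
  exact isUnitRegular_of_mul_eq hy hy' hp hp' hq hq' hqp hpq

theorem finite_rAnn {a x : R} (hx : a * x * a = a) : Module.Finite Rᵐᵒᵖ (rAnn R a) :=
  .equiv (LinearEquiv.ofEq _ _ (rAnn_eq_rIdeal hx)).symm

theorem projective_rAnn {a x : R} (hx : a * x * a = a) : Module.Projective Rᵐᵒᵖ (rAnn R a) :=
  haveI := projective_rIdeal (isIdempotentElem_mul_right hx).one_sub
  .of_equiv (LinearEquiv.ofEq _ _ (rAnn_eq_rIdeal hx)).symm

theorem finite_quotient_rIdeal {a x : R} (hx : a * x * a = a) :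
    Module.Finite Rᵐᵒᵖ (R ⧸ rIdeal R a) :=
  .equiv (quotientEquivRIdeal hx).symm

theorem projective_quotient_rIdeal {a x : R} (hx : a * x * a = a) :
    Module.Projective Rᵐᵒᵖ (R ⧸ rIdeal R a) :=
  haveI := projective_rIdeal (isIdempotentElem_mul_left hx).one_sub
  .of_equiv (quotientEquivRIdeal hx).symm

end RightIdeals

end SepExchange

open SepExchange in
theorem stmt9_general (R : Type) [Ring R]
    (hsep : Separative R)
    (a s : R) (h : a - a ^ 3 = (a - a ^ 3) * s * (a - a ^ 3))
    (h1 : Propto R (↥(rIdeal R (a - a ^ 3))) (↥(rAnn R a)))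
    (h2 : Propto R (↥(rIdeal R (a - a ^ 3))) (R ⧸ rIdeal R a)) :
    IsUnitRegular R a := by
  have hx : a * ((1 - a ^ 2) * s * (1 - a ^ 2) + a) * a = a :=
    calc _ = (a - a ^ 3) * s * (a - a ^ 3) + a ^ 3 := by noncomm_ring
      _ = a := by rw [← h]; noncomm_ring
  have := finite_rAnn hx
  have := projective_rAnn hx
  have := finite_quotient_rIdeal hx
  have := projective_quotient_rIdeal hx
  obtain ⟨φ⟩ := hsep.nonempty_linearEquiv_of_prod_equiv_prod
    (rAnnProdEquivQuotientProd h.symm) h1 h2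
  exact isUnitRegular_of_rAnn_equiv hx φ

open SepExchange in
/-- Lemma 2.4: in a separative exchange ring with `2` invertible, if `a - a³`
is regular and `(a-a³)R ∝ r(a)`, `(a-a³)R ∝ R/aR`, then `a` is unit-regular. -/
theorem stmt9 (R : Type) [Ring R] [Invertible (2 : R)]
    (hsep : Separative R) (hex : ExchangeRing R)
    (a s : R) (h : a - a ^ 3 = (a - a ^ 3) * s * (a - a ^ 3))
    (h1 : Propto R (↥(rIdeal R (a - a ^ 3))) (↥(rAnn R a)))
    (h2 : Propto R (↥(rIdeal R (a - a ^ 3))) (R ⧸ rIdeal R a)) :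
    IsUnitRegular R a :=
  stmt9_general R hsep a s h h1 h2
end
end

section
/- Every special clean element of a ring R is unit-regular. That is, if there exists an idempotent e ∈ R such that a - e is a unit and aR ∩ eR = 0, then a = aua for some unit u ∈ R. -/
noncomputable section

namespace SepExchange

variable {R : Type} [Ring R]

theorem mem_rIdeal_iff {a x : R} : x ∈ rIdeal R a ↔ ∃ r, a * r = x := by
  simp only [rIdeal, Submodule.mem_span_singleton, MulOpposite.smul_eq_mul_unop]
  exact ⟨fun ⟨r, h⟩ => ⟨r.unop, h⟩, fun ⟨r, h⟩ => ⟨MulOpposite.op r, h⟩⟩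

/-- Writing `(a - e) v = 1` as `a v = 1 + e v` gives `a v a - a = e (v a)`, an element of
`aR ∩ eR`. -/
theorem eq_mul_mul_self_of_sub_mul_eq_one {a e v : R} (hv : (a - e) * v = 1)
    (hint : rIdeal R a ⊓ rIdeal R e = ⊥) : a = a * v * a := by
  have hav : a * v = 1 + e * v := by rw [← hv, sub_mul, sub_add_cancel]
  have h_in_a : a * v * a - a ∈ rIdeal R a :=
    mem_rIdeal_iff.mpr ⟨v * a - 1, by noncomm_ring⟩
  have h_in_e : a * v * a - a ∈ rIdeal R e :=
    mem_rIdeal_iff.mpr ⟨v * a, by rw [hav]; noncomm_ring⟩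
  have h_zero : a * v * a - a = 0 := by
    simpa [hint] using Submodule.mem_inf.mpr ⟨h_in_a, h_in_e⟩
  exact (sub_eq_zero.mp h_zero).symm

end SepExchange

open SepExchange in
theorem stmt12_general (R : Type) [Ring R] (a e : R)
    (hu : IsUnit (a - e))
    (hint : rIdeal R a ⊓ rIdeal R e = ⊥) :
    ∃ u : Rˣ, a = a * (u : R) * a := by
  obtain ⟨u, hu⟩ := hu
  exact ⟨u⁻¹, eq_mul_mul_self_of_sub_mul_eq_one (by rw [← hu, Units.mul_inv]) hint⟩

open SepExchange in
/-- Every special clean element is unit-regular. -/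
theorem stmt12 (R : Type) [Ring R] (a e : R)
    (he : IsIdempotentElem e) (hu : IsUnit (a - e))
    (hint : rIdeal R a ⊓ rIdeal R e = ⊥) :
    ∃ u : Rˣ, a = a * (u : R) * a :=
  stmt12_general R a e hu hint
end
end
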